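/- Let n and a be natural numbers with a ≤ n. The number of x ∈ {0,1}^n whose De Bruijn–Tengbergen–Kruyswijk marking contains exactly a unmarked zeros (and any number of unmarked ones) equals C(n, ⌊(n−a)/2⌋). -/

import Mathlib

/-- One step of the De Bruijn–Tengbergen–Kruyswijk marking procedure on `x` with current
marked set `M`: choose unmarked coordinates `i < j` with `x i = 1`, `x j = 0`, all
coordinates strictly between them already marked, and mark both. -/
def MarkStep {n : ℕ} (x : Fin n → Bool) (M M' : Finset (Fin n)) : Prop :=
  ∃ i j : Fin n, i < j ∧ i ∉ M ∧ j ∉ M ∧ x i = true ∧ x j = false ∧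
    (∀ k : Fin n, i < k → k < j → k ∈ M) ∧ M' = insert i (insert j M)


def mstep (st : ℕ × ℕ) (b : Bool) : ℕ × ℕ :=
  if b then (st.1, st.2 + 1) else if st.2 = 0 then (st.1 + 1, 0) else (st.1, st.2 - 1)

def fl (l : List Bool) : ℕ := (l.foldl mstep (0, 0)).1

lemma mstep_true (st : ℕ × ℕ) : mstep st true = (st.1, st.2 + 1) := rfl
lemma mstep_false_zero (a : ℕ) : mstep (a, 0) false = (a + 1, 0) := rfl
lemma mstep_false_pos (a s : ℕ) (hs : s ≠ 0) : mstep (a, s) false = (a, s - 1) := by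
  simp [mstep, hs]

lemma foldl_shift (l : List Bool) : ∀ a s : ℕ,
    l.foldl mstep (a, s) = ((l.foldl mstep (0, s)).1 + a, (l.foldl mstep (0, s)).2) := by
  induction l with
  | nil => simp
  | cons b t ih =>
    intro a s
    cases b with
    | true =>
      rw [List.foldl_cons, List.foldl_cons, mstep_true, mstep_true]
      exact ih a (s+1)
    | false =>
      by_cases hs : s = 0
      · subst hs
        rw [List.foldl_cons, List.foldl_cons, mstep_false_zero, mstep_false_zero,
          ih (a+1) 0, ih 1 0]
        simp only [Prod.mk.injEq, and_true, true_and, Prod.fst, Prod.snd]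
        omega
      · rw [List.foldl_cons, List.foldl_cons, mstep_false_pos _ _ hs, mstep_false_pos _ _ hs]
        exact ih a (s-1)

lemma foldl_succ (l : List Bool) : ∀ s : ℕ,
    l.foldl mstep (0, s + 1) =
      if (l.foldl mstep (0, s)).1 = 0 then (0, (l.foldl mstep (0, s)).2 + 1)
      else ((l.foldl mstep (0, s)).1 - 1, (l.foldl mstep (0, s)).2) := by
  induction l with
  | nil => simp
  | cons b t ih =>
    intro s
    cases b with
    | true =>
      rw [List.foldl_cons, List.foldl_cons, mstep_true, mstep_true]
      exact ih (s+1)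
    | false =>
      by_cases hs : s = 0
      · subst hs
        rw [List.foldl_cons, List.foldl_cons, mstep_false_pos _ _ (show (0:ℕ)+1 ≠ 0 by omega),
          mstep_false_zero]
        simp only [Nat.sub_self]
        rw [foldl_shift t 1 0]
        simp
      · rw [List.foldl_cons, List.foldl_cons, mstep_false_pos _ _ (by omega),
          mstep_false_pos _ _ hs]
        have h1 : s + 1 - 1 = s - 1 + 1 := by omega
        rw [h1, ih (s-1)]
    
lemma fl_false_cons (l : List Bool) : fl (false :: l) = fl l + 1 := by
  simp only [fl, List.foldl_cons, mstep_false_zero]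
  rw [foldl_shift l 1 0]

lemma fl_true_cons (l : List Bool) : fl (true :: l) = fl l - 1 := by
  simp only [fl, List.foldl_cons, mstep_true]
  rw [show (0:ℕ) + 1 = 0 + 1 from rfl, foldl_succ l 0]
  split <;> simp_all

lemma fl_nil : fl [] = 0 := rfl

lemma foldl_fst_le (l : List Bool) : ∀ a s : ℕ, (l.foldl mstep (a, s)).1 ≤ a + l.length := by
  induction l with
  | nil => simp
  | cons b t ih =>
    intro a s
    cases b with
    | true =>
      rw [List.foldl_cons, mstep_true]
      exact (ih a (s+1)).trans (by simp)
    | false =>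
      by_cases hs : s = 0
      · subst hs
        rw [List.foldl_cons, mstep_false_zero]
        exact (ih (a+1) 0).trans (by simp; omega)
      · rw [List.foldl_cons, mstep_false_pos _ _ hs]
        exact (ih a (s-1)).trans (by simp)

lemma fl_le_length (l : List Bool) : fl l ≤ l.length := by
  simpa [fl] using foldl_fst_le l 0 0

lemma fl_middle (u v : List Bool) : fl (u ++ true :: false :: v) = fl (u ++ v) := by
  simp only [fl, List.foldl_append, List.foldl_cons]
  have h : ∀ st : ℕ × ℕ, mstep (mstep st true) false = st := by
    rintro ⟨a, s⟩
    simp [mstep]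
  rw [h]

lemma nopattern_struct : ∀ l : List Bool, (∀ U V, l ≠ U ++ true :: false :: V) →
    ∃ a b, l = List.replicate a false ++ List.replicate b true := by
  intro l
  induction l with
  | nil => exact fun _ => ⟨0, 0, rfl⟩
  | cons c t ih =>
    intro h
    cases c with
    | false =>
      obtain ⟨a, b, hab⟩ := ih (fun U V hUV => h (false :: U) V (by simp [hUV]))
      exact ⟨a + 1, b, by simp [hab, List.replicate_succ]⟩
    | true =>
      obtain ⟨a, b, hab⟩ := ih (fun U V hUV => h (true :: U) V (by simp [hUV]))
      cases a with
      | zero =>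
        refine ⟨0, b + 1, ?_⟩
        simp [hab, List.replicate_succ]
      | succ a' =>
        exfalso
        exact h [] (List.replicate a' false ++ List.replicate b true)
          (by simp [hab, List.replicate_succ])

lemma fl_replicate (a b : ℕ) : fl (List.replicate a false ++ List.replicate b true) = a := by
  have h1 : ∀ m c : ℕ, (List.replicate m false).foldl mstep (c, 0) = (c + m, 0) := by
    intro m
    induction m with
    | zero => simp
    | succ k ihk =>
      intro c
      rw [List.replicate_succ, List.foldl_cons, mstep_false_zero, ihk (c+1)]
      simp only [Prod.mk.injEq, and_true, true_and, Prod.fst, Prod.snd]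
      omega
  have h2 : ∀ m c s : ℕ, ((List.replicate m true).foldl mstep (c, s)).1 = c := by
    intro m
    induction m with
    | zero => simp
    | succ k ihk =>
      intro c s
      rw [List.replicate_succ, List.foldl_cons, mstep_true]
      exact ihk c (s+1)
  simp only [fl, List.foldl_append, h1 a 0]
  simpa using h2 b a 0

lemma count_replicate_append (a b : ℕ) :
    (List.replicate a false ++ List.replicate b true).count false = a := by
  simp [List.count_append, List.count_replicate]

def LM {n : ℕ} (x : Fin n → Bool) (M : Finset (Fin n)) : List Bool :=
  ((List.finRange n).filter (fun k => decide (k ∉ M))).map x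

lemma filter_split {n : ℕ} (M : Finset (Fin n)) (i j : Fin n) (hij : i < j)
    (hiM : i ∉ M) (hjM : j ∉ M) :
    ∀ l : List (Fin n), l.Pairwise (· < ·) → i ∈ l → j ∈ l →
      (∀ k ∈ l, i < k → k < j → k ∈ M) →
      ∃ P S : List (Fin n),
        l.filter (fun k => decide (k ∉ M)) = P ++ i :: j :: S ∧
        l.filter (fun k => decide (k ∉ insert i (insert j M))) = P ++ S := by
  intro l
  induction l with
  | nil => intro _ hi; exact absurd hi List.not_mem_nil
  | cons h t ih =>
    intro hpw hi hj hmid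
    have hlt : ∀ k ∈ t, h < k := fun k hk => (List.pairwise_cons.1 hpw).1 k hk
    have hpt : t.Pairwise (· < ·) := (List.pairwise_cons.1 hpw).2
    by_cases hhi : h = i
    · have hhi' : i = h := hhi.symm
      subst hhi'
      have hjt : j ∈ t := by
        rcases List.mem_cons.1 hj with h1 | h1
        · exact absurd h1.symm (ne_of_lt hij)
        · exact h1
      obtain ⟨A, B, hAB⟩ := List.mem_iff_append.1 hjt
      have hpwAB := hAB ▸ hpt
      have hAj : ∀ k ∈ A, k < j := by
        intro k hk
        exact (List.pairwise_append.1 hpwAB).2.2 k hk j List.mem_cons_self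
      have hjB : ∀ k ∈ B, j < k := by
        intro k hk
        exact (List.pairwise_cons.1 (List.pairwise_append.1 hpwAB).2.1).1 k hk
      have hAmem : ∀ k ∈ A, k ∈ M := by
        intro k hk
        exact hmid k (List.mem_cons_of_mem _ (hAB ▸ List.mem_append_left _ hk))
          (hlt k (hAB ▸ List.mem_append_left _ hk)) (hAj k hk)
      have hfA : ∀ (N : Finset (Fin n)), M ⊆ N → A.filter (fun k => decide (k ∉ N)) = [] := by
        intro N hN
        rw [List.filter_eq_nil_iff]
        intro k hk
        simp [hN (hAmem k hk)]
      have hBcong : B.filter (fun k => decide (k ∉ insert i (insert j M)))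
          = B.filter (fun k => decide (k ∉ M)) := by
        apply List.filter_congr
        intro k hk
        have h1 : j < k := hjB k hk
        have h2 : k ≠ i := by intro e; subst e; exact absurd (hij.trans h1) (lt_irrefl _)
        have h3 : k ≠ j := ne_of_gt h1
        simp [Finset.mem_insert, h2, h3]
      refine ⟨[], B.filter (fun k => decide (k ∉ M)), ?_, ?_⟩
      · rw [List.filter_cons, if_pos (by simpa using hiM), hAB, List.filter_append,
          hfA M (le_refl M), List.filter_cons, if_pos (by simpa using hjM)]
        simp
      · rw [List.filter_cons, if_neg (by simp), hAB, List.filter_append,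
          hfA _ (Finset.subset_insert _ _ |>.trans (Finset.subset_insert _ _)),
          List.filter_cons, if_neg (by simp), hBcong]
    · have hit : i ∈ t := by
        rcases List.mem_cons.1 hi with h1 | h1
        · exact absurd h1.symm hhi
        · exact h1
      have hhlti : h < i := hlt i hit
      have hjt : j ∈ t := by
        rcases List.mem_cons.1 hj with h1 | h1
        · exact absurd h1.symm (ne_of_lt (hhlti.trans hij))
        · exact h1
      obtain ⟨P, S, hP, hS⟩ := ih hpt hit hjt
        (fun k hk => hmid k (List.mem_cons_of_mem _ hk))
      by_cases hhM : h ∈ M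
      · refine ⟨P, S, ?_, ?_⟩
        · rw [List.filter_cons, if_neg (by simp [hhM]), hP]
        · rw [List.filter_cons, if_neg (by simp [hhM]), hS]
      · have hh' : h ∉ insert i (insert j M) := by
          simp [Finset.mem_insert, hhM, hhi, ne_of_lt (hhlti.trans hij)]
        refine ⟨h :: P, S, ?_, ?_⟩
        · rw [List.filter_cons, if_pos (by simpa using hhM), hP]
          simp
        · rw [List.filter_cons, if_pos (by simpa using hh'), hS]
          simp

lemma markstep_decomp {n : ℕ} (x : Fin n → Bool) {M M' : Finset (Fin n)}
    (h : MarkStep x M M') :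
    ∃ P S : List Bool, LM x M = P ++ true :: false :: S ∧ LM x M' = P ++ S := by
  obtain ⟨i, j, hij, hiM, hjM, hxi, hxj, hmid, hM'⟩ := h
  obtain ⟨P, S, hP, hS⟩ := filter_split M i j hij hiM hjM (List.finRange n)
    (List.pairwise_lt_finRange n) (List.mem_finRange i) (List.mem_finRange j)
    (fun k _ hik hkj => hmid k hik hkj)
  refine ⟨P.map x, S.map x, ?_, ?_⟩
  · rw [LM, hP]
    simp [hxi, hxj]
  · rw [LM, hM', hS]
    simp

lemma markstep_fl {n : ℕ} (x : Fin n → Bool) {M M' : Finset (Fin n)}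
    (h : MarkStep x M M') : fl (LM x M') = fl (LM x M) := by
  obtain ⟨P, S, hP, hS⟩ := markstep_decomp x h
  rw [hP, hS, fl_middle]

lemma LM_empty {n : ℕ} (x : Fin n → Bool) : LM x ∅ = List.ofFn x := by
  rw [LM, List.ofFn_eq_map]
  congr 1
  simp

lemma chain_fl {n : ℕ} (x : Fin n → Bool) {M : Finset (Fin n)}
    (h : Relation.ReflTransGen (MarkStep x) ∅ M) : fl (LM x M) = fl (List.ofFn x) := by
  induction h with
  | refl => rw [LM_empty]
  | tail _ hstep ih => rw [markstep_fl x hstep, ih]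

lemma terminal_nopattern {n : ℕ} (x : Fin n → Bool) {M : Finset (Fin n)}
    (hterm : ∀ M', ¬ MarkStep x M M') :
    ∀ U V : List Bool, LM x M ≠ U ++ true :: false :: V := by
  intro U V hUV
  rw [LM] at hUV
  rw [List.map_eq_append_iff] at hUV
  obtain ⟨u, w, huw, hu, hw⟩ := hUV
  rw [List.map_eq_cons_iff] at hw
  obtain ⟨i, w', hw', hxi, hw''⟩ := hw
  rw [List.map_eq_cons_iff] at hw''
  obtain ⟨j, v', hv', hxj, _⟩ := hw''
  subst hv'
  subst hw'
  -- now (finRange n).filter p = u ++ i :: j :: v'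
  set lf := (List.finRange n).filter (fun k => decide (k ∉ M)) with hlf
  have hpw : lf.Pairwise (· < ·) :=
    List.Pairwise.sublist List.filter_sublist (List.pairwise_lt_finRange n)
  have hpw' := huw ▸ hpw
  have hpw2 := (List.pairwise_append.1 hpw').2.1
  have hij : i < j := (List.pairwise_cons.1 hpw2).1 j (by simp)
  have hmemlf : ∀ k, k ∈ lf ↔ k ∉ M := by
    intro k
    rw [hlf, List.mem_filter]
    simp
  have hiM : i ∉ M := (hmemlf i).1 (by rw [huw]; simp)
  have hjM : j ∉ M := (hmemlf j).1 (by rw [huw]; simp)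
  apply hterm (insert i (insert j M))
  refine ⟨i, j, hij, hiM, hjM, hxi, hxj, ?_, rfl⟩
  intro k hik hkj
  by_contra hkM
  have hk : k ∈ lf := (hmemlf k).2 hkM
  rw [huw] at hk
  rcases List.mem_append.1 hk with hk | hk
  · have : k < i := (List.pairwise_append.1 hpw').2.2 k hk i (by simp)
    exact absurd (hik.trans this) (lt_irrefl _)
  · rcases List.mem_cons.1 hk with rfl | hk
    · exact absurd hik (lt_irrefl _)
    · rcases List.mem_cons.1 hk with rfl | hk
      · exact absurd hkj (lt_irrefl _)
      · have : j < k := (List.pairwise_cons.1 (List.pairwise_cons.1 hpw2).2).1 k hk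
        exact absurd (hkj.trans this) (lt_irrefl _)

lemma markstep_card {n : ℕ} (x : Fin n → Bool) {M M' : Finset (Fin n)}
    (h : MarkStep x M M') : M'.card = M.card + 2 := by
  obtain ⟨i, j, hij, hiM, hjM, _, _, _, rfl⟩ := h
  rw [Finset.card_insert_of_notMem (by simp [hiM, ne_of_lt hij]),
    Finset.card_insert_of_notMem hjM]

lemma exists_terminal {n : ℕ} (x : Fin n → Bool) (M : Finset (Fin n)) :
    ∃ N, Relation.ReflTransGen (MarkStep x) M N ∧ ∀ N', ¬ MarkStep x N N' := by
  have key : ∀ m (M : Finset (Fin n)), n - M.card ≤ m →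
      ∃ N, Relation.ReflTransGen (MarkStep x) M N ∧ ∀ N', ¬ MarkStep x N N' := by
    intro m
    induction m with
    | zero =>
      intro M hM
      refine ⟨M, Relation.ReflTransGen.refl, fun N' hN' => ?_⟩
      have h1 := markstep_card x hN'
      have h2 : N'.card ≤ n := le_of_le_of_eq (Finset.card_le_univ N') (by simp)
      omega
    | succ m ih =>
      intro M hM
      by_cases ht : ∀ N', ¬ MarkStep x M N'
      · exact ⟨M, Relation.ReflTransGen.refl, ht⟩
      · push_neg at ht
        obtain ⟨M', hM'⟩ := ht
        have h1 := markstep_card x hM'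
        have h2 : M'.card ≤ n := le_of_le_of_eq (Finset.card_le_univ M') (by simp)
        obtain ⟨N, hr, hterm⟩ := ih M' (by omega)
        exact ⟨N, Relation.ReflTransGen.head hM' hr, hterm⟩
  exact key n M (by omega)

lemma card_count {n : ℕ} (x : Fin n → Bool) (M : Finset (Fin n)) :
    (Finset.univ.filter fun i => i ∉ M ∧ x i = false).card = (LM x M).count false := by
  have h1 : ∀ (p : Fin n → Prop) [DecidablePred p],
      (Finset.univ.filter p).card = (List.finRange n).countP (fun i => decide (p i)) := by
    intro p _
    simp [Fin.univ_def, Finset.filter, Multiset.filter, List.countP_eq_length_filter]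
    rfl
  rw [LM, List.count_eq_countP, List.countP_map, List.countP_filter, h1]
  apply List.countP_congr
  intro k _
  by_cases h2 : k ∈ M <;> by_cases h3 : x k = false <;> simp [h2, h3, Function.comp]

def Cnt (n a : ℕ) : ℕ :=
  (Finset.univ.filter fun x : Fin n → Bool => fl (List.ofFn x) = a).card

lemma fl_cons_eq {n : ℕ} (b : Bool) (y : Fin n → Bool) :
    fl (List.ofFn (Fin.cons b y)) = if b then fl (List.ofFn y) - 1 else fl (List.ofFn y) + 1 := by
  rw [List.ofFn_succ]
  simp only [Fin.cons_zero, Fin.cons_succ]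
  cases b
  · rw [fl_false_cons]; rfl
  · rw [fl_true_cons]; rfl

lemma cnt_succ (n a : ℕ) : Cnt (n + 1) a =
    (Finset.univ.filter fun y : Fin n → Bool => fl (List.ofFn y) + 1 = a).card +
    (Finset.univ.filter fun y : Fin n → Bool => fl (List.ofFn y) - 1 = a).card := by
  classical
  rw [Cnt]
  have hsplit : (Finset.univ.filter fun x : Fin (n+1) → Bool => fl (List.ofFn x) = a) =
      ((Finset.univ.filter fun y : Fin n → Bool => fl (List.ofFn y) + 1 = a).image
        (Fin.cons false)) ∪
      ((Finset.univ.filter fun y : Fin n → Bool => fl (List.ofFn y) - 1 = a).image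
        (Fin.cons true)) := by
    ext x
    simp only [Finset.mem_filter, Finset.mem_univ, true_and, Finset.mem_union,
      Finset.mem_image]
    constructor
    · intro hx
      cases hb : x 0
      · left
        refine ⟨Fin.tail x, ?_, ?_⟩
        · have := fl_cons_eq (x 0) (Fin.tail x)
          rw [Fin.cons_self_tail] at this
          rw [hb] at this
          simp only [if_neg Bool.false_ne_true] at this
          omega
        · rw [← hb, Fin.cons_self_tail]
      · right
        refine ⟨Fin.tail x, ?_, ?_⟩
        · have := fl_cons_eq (x 0) (Fin.tail x)
          rw [Fin.cons_self_tail] at this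
          rw [hb] at this
          simp only [if_pos] at this
          omega
        · rw [← hb, Fin.cons_self_tail]
    · rintro (⟨y, hy, rfl⟩ | ⟨y, hy, rfl⟩)
      · rw [fl_cons_eq]
        simpa using hy
      · rw [fl_cons_eq]
        simpa using hy
  rw [hsplit, Finset.card_union_of_disjoint, Finset.card_image_of_injective _
    (Fin.cons_right_injective _), Finset.card_image_of_injective _
    (Fin.cons_right_injective _)]
  · rw [Finset.disjoint_left]
    rintro z hz1 hz2
    simp only [Finset.mem_image] at hz1 hz2
    obtain ⟨y1, _, h1⟩ := hz1
    obtain ⟨y2, _, h2⟩ := hz2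
    have : z 0 = false := by rw [← h1]; rfl
    rw [← h2] at this
    exact absurd this (by simp)

lemma cnt_le (n a : ℕ) (h : n < a) : Cnt n a = 0 := by
  rw [Cnt, Finset.card_eq_zero, Finset.filter_eq_empty_iff]
  intro x _
  have := fl_le_length (List.ofFn x)
  rw [List.length_ofFn] at this
  omega

lemma cnt_eq : ∀ n a : ℕ, Cnt n a = if a ≤ n then Nat.choose n ((n - a) / 2) else 0 := by
  intro n
  induction n with
  | zero =>
    intro a
    cases a with
    | zero =>
      rw [Cnt]
      rw [Finset.filter_true_of_mem (fun x _ => by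
        have h := fl_le_length (List.ofFn x)
        rw [List.length_ofFn] at h
        omega)]
      simp
    | succ a' => rw [cnt_le 0 (a' + 1) (by omega)]; simp
  | succ n ih =>
    intro a
    rw [cnt_succ]
    rcases Nat.eq_zero_or_pos a with rfl | ha
    · -- a = 0
      have ht1 : (Finset.univ.filter fun y : Fin n → Bool => fl (List.ofFn y) + 1 = 0).card
          = 0 := by
        rw [Finset.card_eq_zero, Finset.filter_eq_empty_iff]; intro y _; omega
      have ht2 : (Finset.univ.filter fun y : Fin n → Bool => fl (List.ofFn y) - 1 = 0)
          = (Finset.univ.filter fun y : Fin n → Bool => fl (List.ofFn y) = 0) ∪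
            (Finset.univ.filter fun y : Fin n → Bool => fl (List.ofFn y) = 1) := by
        rw [← Finset.filter_or]
        apply Finset.filter_congr
        intro y _
        constructor <;> (intro h; omega)
      have hdisj : Disjoint (Finset.univ.filter fun y : Fin n → Bool => fl (List.ofFn y) = 0)
          (Finset.univ.filter fun y : Fin n → Bool => fl (List.ofFn y) = 1) := by
        rw [Finset.disjoint_left]
        intro z hz1 hz2
        simp only [Finset.mem_filter] at hz1 hz2
        omega
      rw [ht1, ht2, Finset.card_union_of_disjoint hdisj]
      have h0 := ih 0
      have h1 := ih 1
      rw [if_pos (by omega)] at h0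
      rw [show (Finset.univ.filter fun y : Fin n → Bool => fl (List.ofFn y) = 0).card
          = Cnt n 0 from rfl,
        show (Finset.univ.filter fun y : Fin n → Bool => fl (List.ofFn y) = 1).card
          = Cnt n 1 from rfl, h0, h1]
      rw [if_pos (show (0:ℕ) ≤ n + 1 from Nat.zero_le _)]
      simp only [Nat.sub_zero]
      rcases Nat.eq_zero_or_pos n with rfl | hn
      · simp
      · rw [if_pos (show 1 ≤ n by omega)]
        -- Pascal
        have hm : (n + 1) / 2 ≥ 1 := by omega
        obtain ⟨k, hk⟩ : ∃ k, (n + 1) / 2 = k + 1 := ⟨(n+1)/2 - 1, by omega⟩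
        rw [hk, Nat.choose_succ_succ']
        rcases Nat.even_or_odd n with he | ho
        · obtain ⟨c, rfl⟩ := he
          have e1 : (c + c) / 2 = k + 1 := by omega
          have e2 : (c + c - 1) / 2 = k := by omega
          rw [e1, e2]
          omega
        · obtain ⟨c, rfl⟩ := ho
          have e1 : (2 * c + 1) / 2 = c := by omega
          have e2 : (2 * c + 1 - 1) / 2 = c := by omega
          have e3 : k = c := by omega
          rw [e1, e2, e3]
          have hsym : (2 * c + 1).choose (c + 1) = (2 * c + 1).choose c := by
            rw [← Nat.choose_symm (by omega : c + 1 ≤ 2 * c + 1)]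
            congr 1
            omega
          omega
    · -- a ≥ 1
      have ht1 : (Finset.univ.filter fun y : Fin n → Bool => fl (List.ofFn y) + 1 = a)
          = (Finset.univ.filter fun y : Fin n → Bool => fl (List.ofFn y) = a - 1) := by
        apply Finset.filter_congr; intro y _; constructor <;> (intro h; omega)
      have ht2 : (Finset.univ.filter fun y : Fin n → Bool => fl (List.ofFn y) - 1 = a)
          = (Finset.univ.filter fun y : Fin n → Bool => fl (List.ofFn y) = a + 1) := by
        apply Finset.filter_congr; intro y _; constructor <;> (intro h; omega)
      rw [ht1, ht2]
      rw [show (Finset.univ.filter fun y : Fin n → Bool => fl (List.ofFn y) = a - 1).card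
        = Cnt n (a - 1) from rfl,
        show (Finset.univ.filter fun y : Fin n → Bool => fl (List.ofFn y) = a + 1).card
        = Cnt n (a + 1) from rfl, ih, ih]
      by_cases hle : a ≤ n + 1
      · rw [if_pos hle, if_pos (by omega)]
        rcases Nat.lt_or_ge a n with hlt | hge
        · -- a ≤ n - 1
          rw [if_pos (by omega)]
          obtain ⟨k, hk⟩ : ∃ k, (n + 1 - a) / 2 = k + 1 := ⟨(n + 1 - a) / 2 - 1, by omega⟩
          rw [hk, Nat.choose_succ_succ']
          have e1 : (n - (a - 1)) / 2 = k + 1 := by omega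
          have e2 : (n - (a + 1)) / 2 = k := by omega
          rw [e1, e2]
          omega
        · -- a = n or a = n + 1
          rw [if_neg (by omega)]
          rcases (by omega : a = n ∨ a = n + 1) with rfl | rfl
          · have e1 : (a - (a - 1)) / 2 = 0 := by omega
            have e2 : (a + 1 - a) / 2 = 0 := by omega
            rw [e1, e2]
            simp
          · have e1 : (n - (n + 1 - 1)) / 2 = 0 := by omega
            have e2 : (n + 1 - (n + 1)) / 2 = 0 := by omega
            rw [e1, e2]
            simp
      · rw [if_neg hle, if_neg (by omega), if_neg (by omega)]

lemma terminal_count {n : ℕ} (x : Fin n → Bool) {M : Finset (Fin n)}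
    (hr : Relation.ReflTransGen (MarkStep x) ∅ M)
    (ht : ∀ M', ¬ MarkStep x M M') :
    (Finset.univ.filter fun i => i ∉ M ∧ x i = false).card = fl (List.ofFn x) := by
  obtain ⟨a, b, hab⟩ := nopattern_struct (LM x M) (fun U V => terminal_nopattern x ht U V)
  rw [card_count, hab, count_replicate_append, ← chain_fl x hr, hab, fl_replicate]

/-- For `a ≤ n`, the number of `x ∈ {0,1}^n` whose De Bruijn–Tengbergen–Kruyswijk marking
has exactly `a` unmarked zeros (and any number of unmarked ones) equals
`C(n, ⌊(n−a)/2⌋)`. -/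
theorem card_marking_zeros (n a : ℕ) (hle : a ≤ n) :
    {x : Fin n → Bool | ∃ M : Finset (Fin n),
        Relation.ReflTransGen (MarkStep x) ∅ M ∧ (∀ M', ¬ MarkStep x M M') ∧
        (Finset.univ.filter fun i => i ∉ M ∧ x i = false).card = a}.ncard =
      Nat.choose n ((n - a) / 2) := by
  classical
  have hset : {x : Fin n → Bool | ∃ M : Finset (Fin n),
        Relation.ReflTransGen (MarkStep x) ∅ M ∧ (∀ M', ¬ MarkStep x M M') ∧
        (Finset.univ.filter fun i => i ∉ M ∧ x i = false).card = a} =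
      ↑(Finset.univ.filter fun x : Fin n → Bool => fl (List.ofFn x) = a) := by
    ext x
    simp only [Set.mem_setOf_eq, Finset.coe_filter, Finset.mem_univ, true_and]
    constructor
    · rintro ⟨M, hr, ht, hc⟩
      rw [← hc]
      exact (terminal_count x hr ht).symm
    · intro hx
      obtain ⟨N, hr, ht⟩ := exists_terminal x ∅
      exact ⟨N, hr, ht, by rw [terminal_count x hr ht, hx]⟩
  rw [hset, Set.ncard_coe_finset]
  have h := cnt_eq n a
  rw [if_pos hle] at h
  exact h
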